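/- Let $m_1, m_2 \ge 2$ be integers, $m = m_1 + m_2$, and $r_1, r_2 \in (0,1)$ with $r_1^2 + r_2^2 = 1$. Set $\lambda_1 = 2 r_2^2\left(\frac{m_1}{r_1^2} - \frac{m_2}{r_2^2}\right)$ and $\lambda_2 = 2 r_1^2\left(\frac{m_2}{r_2^2} - \frac{m_1}{r_1^2}\right)$, and let $h_1, h_2 \ge 0$ be real numbers satisfying $\frac{m_1^2 h_1^2}{r_1^2} - \frac{m_2^2 h_2^2}{r_2^2} + (r_2^2 - r_1^2)\left(\frac{m_2}{r_2^2} - \frac{m_1}{r_1^2}\right)^2 = 0$. Then $h_1^2 = \frac{1}{r_1^2} - \frac{\lambda_1}{m_1}$ if and only if $h_2^2 = \frac{1}{r_2^2} - \frac{\lambda_2}{m_2}$, and in this case $\frac{m_1^2}{m^2} h_1^2 + \frac{m_2^2}{m^2} h_2^2 + \frac{r_1^2 r_2^2}{m^2}\left(\frac{m_2}{r_2^2} - \frac{m_1}{r_1^2}\right)^2 = 1$. -/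

import Mathlib

/-!
Write `a = r₁²`, `b = r₂²` and `D = m₂/b - m₁/a`, so that `λ₁ = -2bD` and `λ₂ = 2aD`.
Because `a + b = 1`, the biharmonicity equation vanishes identically at the maximal values
`H₁ = 1/a + 2bD/m₁`, `H₂ = 1/b - 2aD/m₂`; hence it can be rewritten as
`(m₁²/a) (h₁² - H₁) = (m₂²/b) (h₂² - H₂)`, and one defect vanishes iff the other does.
At the maximal values, with `x = m₁/a`, `y = m₂/b`, the product's squared mean curvature is
`(a x² + b y² - a b (y - x)²) / (a x + b y)²`, which equals `1` once more because `a + b = 1`.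
-/

theorem eq_iff_eq_of_mul_sub_eq_mul_sub {R : Type*} [Ring R] [NoZeroDivisors R] {c d u v U V : R}
    (hc : c ≠ 0) (hd : d ≠ 0) (h : c * (u - U) = d * (v - V)) : u = U ↔ v = V := by
  rw [← sub_eq_zero (a := u), ← sub_eq_zero (a := v), ← mul_eq_zero_iff_left hc, h,
    mul_eq_zero_iff_left hd]

section MaxMeanCurvature

variable {K : Type*} [Field K] {a b m₁ m₂ : K}

theorem biharmonic_eq_mul_sub_max (ha : a ≠ 0) (hb : b ≠ 0) (hm₁ : m₁ ≠ 0) (hm₂ : m₂ ≠ 0)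
    (hab : a + b = 1) (u v : K) :
    m₁ ^ 2 * u / a - m₂ ^ 2 * v / b + (b - a) * (m₂ / b - m₁ / a) ^ 2 =
      m₁ ^ 2 / a * (u - (1 / a - 2 * b * (m₁ / a - m₂ / b) / m₁)) -
        m₂ ^ 2 / b * (v - (1 / b - 2 * a * (m₂ / b - m₁ / a) / m₂)) := by
  obtain rfl : b = 1 - a := by linear_combination hab
  field_simp
  ring

theorem sq_mean_curvature_product_at_max (ha : a ≠ 0) (hb : b ≠ 0) (hm₁ : m₁ ≠ 0)
    (hm₂ : m₂ ≠ 0) (hm : m₁ + m₂ ≠ 0) (hab : a + b = 1) :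
    m₁ ^ 2 / (m₁ + m₂) ^ 2 * (1 / a - 2 * b * (m₁ / a - m₂ / b) / m₁) +
        m₂ ^ 2 / (m₁ + m₂) ^ 2 * (1 / b - 2 * a * (m₂ / b - m₁ / a) / m₂) +
        a * b / (m₁ + m₂) ^ 2 * (m₂ / b - m₁ / a) ^ 2 = 1 := by
  obtain rfl : b = 1 - a := by linear_combination hab
  field_simp
  ring

end MaxMeanCurvature

theorem max_mean_curvature_iff (m1 m2 : ℕ) (hm1 : 2 ≤ m1) (hm2 : 2 ≤ m2)
    (r1 r2 : ℝ) (hr1 : r1 ∈ Set.Ioo (0 : ℝ) 1) (hr2 : r2 ∈ Set.Ioo (0 : ℝ) 1)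
    (hsum : r1 ^ 2 + r2 ^ 2 = 1)
    (l1 l2 : ℝ)
    (hl1 : l1 = 2 * r2 ^ 2 * ((m1 : ℝ) / r1 ^ 2 - (m2 : ℝ) / r2 ^ 2))
    (hl2 : l2 = 2 * r1 ^ 2 * ((m2 : ℝ) / r2 ^ 2 - (m1 : ℝ) / r1 ^ 2))
    (h1 h2 : ℝ)
    (hbih : (m1 : ℝ) ^ 2 * h1 ^ 2 / r1 ^ 2 - (m2 : ℝ) ^ 2 * h2 ^ 2 / r2 ^ 2 +
        (r2 ^ 2 - r1 ^ 2) * ((m2 : ℝ) / r2 ^ 2 - (m1 : ℝ) / r1 ^ 2) ^ 2 = 0) :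
    (h1 ^ 2 = 1 / r1 ^ 2 - l1 / (m1 : ℝ) ↔ h2 ^ 2 = 1 / r2 ^ 2 - l2 / (m2 : ℝ)) ∧
    (h1 ^ 2 = 1 / r1 ^ 2 - l1 / (m1 : ℝ) →
      (m1 : ℝ) ^ 2 / ((m1 : ℝ) + m2) ^ 2 * h1 ^ 2 +
        (m2 : ℝ) ^ 2 / ((m1 : ℝ) + m2) ^ 2 * h2 ^ 2 +
        r1 ^ 2 * r2 ^ 2 / ((m1 : ℝ) + m2) ^ 2 *
          ((m2 : ℝ) / r2 ^ 2 - (m1 : ℝ) / r1 ^ 2) ^ 2 = 1) := by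
  have ha : r1 ^ 2 ≠ 0 := pow_ne_zero 2 hr1.1.ne'
  have hb : r2 ^ 2 ≠ 0 := pow_ne_zero 2 hr2.1.ne'
  have hm1' : (m1 : ℝ) ≠ 0 := by norm_cast; omega
  have hm2' : (m2 : ℝ) ≠ 0 := by norm_cast; omega
  subst hl1 hl2
  have hdefect := biharmonic_eq_mul_sub_max ha hb hm1' hm2' hsum (h1 ^ 2) (h2 ^ 2)
  rw [hbih, eq_comm, sub_eq_zero] at hdefect
  have hiff := eq_iff_eq_of_mul_sub_eq_mul_sub (by positivity) (by positivity) hdefect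
  refine ⟨hiff, fun h => ?_⟩
  rw [h, hiff.1 h]
  exact sq_mean_curvature_product_at_max ha hb hm1' hm2' (by positivity) hsum
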